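/- Let A be a nonabelian metabelian Lie algebra whose commutant A² is linear-torsion free. If x, y is a pair of zero divisors in A, then both x ∈ A² and y ∈ A². -/

import Mathlib

/-!
If `y ∉ A²` and `⟨x⟩ ∘ ⟨y⟩ = 0`, then every `a ∘ x ∈ A²` annihilates `y`, so linear-torsion
freeness forces `x` to be central. A central element outside `A²` would be annihilated by the
nonzero commutators `u ∘ v`, so `x ∈ A²`; but then `x ∘ y = 0` contradicts linear-torsion freeness
once more. The condition is symmetric in `x` and `y`, so `x ∈ A²` as well.
-/

def lieIdealGen (k : Type*) [CommRing k] {A : Type*} [LieRing A] [LieAlgebra k A] (x : A) :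
    LieIdeal k A :=
  LieSubmodule.lieSpan k A {x}

def IsZeroDivPair (k : Type*) [CommRing k] {A : Type*} [LieRing A] [LieAlgebra k A]
    (x y : A) : Prop :=
  x ≠ 0 ∧ y ≠ 0 ∧ ∀ a ∈ lieIdealGen k x, ∀ b ∈ lieIdealGen k y, ⁅a, b⁆ = 0

def IsLieZeroDivisor (k : Type*) [CommRing k] {A : Type*} [LieRing A] [LieAlgebra k A]
    (x : A) : Prop :=
  ∃ y, IsZeroDivPair k x y

def DSet (k : Type*) [CommRing k] (A : Type*) [LieRing A] [LieAlgebra k A] : Set A :=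
  {x | x = 0 ∨ IsLieZeroDivisor k x}

def FitSet (k : Type*) [CommRing k] (A : Type*) [LieRing A] [LieAlgebra k A] : Set A :=
  {x | LieRing.IsNilpotent (lieIdealGen k x)}

def commutant (k : Type*) [CommRing k] (A : Type*) [LieRing A] [LieAlgebra k A] : LieIdeal k A :=
  ⁅(⊤ : LieIdeal k A), (⊤ : LieIdeal k A)⁆

def IsMetabelianLie (A : Type*) [LieRing A] : Prop :=
  ∀ a b c d : A, ⁅⁅a, b⁆, ⁅c, d⁆⁆ = 0

def LTFree (k : Type*) [CommRing k] (A : Type*) [LieRing A] [LieAlgebra k A] : Prop :=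
  ∀ x ∈ commutant k A, x ≠ 0 → ∀ y ∉ commutant k A, ⁅x, y⁆ ≠ 0

section

variable {k : Type*} [CommRing k] {A : Type*} [LieRing A] [LieAlgebra k A]

theorem lie_mem_commutant (a b : A) : ⁅a, b⁆ ∈ commutant k A :=
  LieSubmodule.lie_mem_lie (LieSubmodule.mem_top a) (LieSubmodule.mem_top b)

theorem self_mem_lieIdealGen (x : A) : x ∈ lieIdealGen k x :=
  LieSubmodule.subset_lieSpan rfl

theorem lie_mem_lieIdealGen (a x : A) : ⁅a, x⁆ ∈ lieIdealGen k x :=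
  (lieIdealGen k x).lie_mem (self_mem_lieIdealGen x)

theorem IsZeroDivPair.symm {x y : A} (h : IsZeroDivPair k x y) : IsZeroDivPair k y x := by
  obtain ⟨hx, hy, hxy⟩ := h
  refine ⟨hy, hx, fun a ha b hb => ?_⟩
  rw [← lie_skew, hxy b hb a ha, neg_zero]

namespace LTFree

theorem eq_zero_of_lie_eq_zero (hltf : LTFree k A) {u v : A} (hu : u ∈ commutant k A)
    (hv : v ∉ commutant k A) (huv : ⁅u, v⁆ = 0) : u = 0 := by
  by_contra hu0
  exact hltf u hu hu0 v hv huv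

theorem mem_commutant_of_forall_lie_eq_zero (hltf : LTFree k A)
    (hnab : ¬ ∀ x y : A, ⁅x, y⁆ = 0) {x : A} (hx : ∀ a : A, ⁅a, x⁆ = 0) :
    x ∈ commutant k A := by
  by_contra hxA
  exact hnab fun u v => hltf.eq_zero_of_lie_eq_zero (lie_mem_commutant u v) hxA (hx _)

theorem mem_commutant_of_lie_eq_zero (hltf : LTFree k A) (hnab : ¬ ∀ x y : A, ⁅x, y⁆ = 0)
    {x y : A} (hx : x ≠ 0) (hxy : ⁅x, y⁆ = 0) (hax : ∀ a : A, ⁅⁅a, x⁆, y⁆ = 0) :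
    y ∈ commutant k A := by
  by_contra hy
  have hcentral : ∀ a : A, ⁅a, x⁆ = 0 := fun a =>
    hltf.eq_zero_of_lie_eq_zero (lie_mem_commutant a x) hy (hax a)
  exact hx (hltf.eq_zero_of_lie_eq_zero
    (hltf.mem_commutant_of_forall_lie_eq_zero hnab hcentral) hy hxy)

end LTFree

theorem IsZeroDivPair.right_mem_commutant (hltf : LTFree k A)
    (hnab : ¬ ∀ x y : A, ⁅x, y⁆ = 0) {x y : A} (h : IsZeroDivPair k x y) :
    y ∈ commutant k A := by
  obtain ⟨hx, -, hxy⟩ := h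
  exact hltf.mem_commutant_of_lie_eq_zero hnab hx
    (hxy x (self_mem_lieIdealGen x) y (self_mem_lieIdealGen y))
    fun a => hxy _ (lie_mem_lieIdealGen a x) y (self_mem_lieIdealGen y)

end

theorem zeroDivPair_mem_commutant_general (k : Type*) [Field k] {A : Type*} [LieRing A]
    [LieAlgebra k A]
    (hnab : ¬ ∀ x y : A, ⁅x, y⁆ = 0) (hltf : LTFree k A)
    {x y : A} (hxy : IsZeroDivPair k x y) :
    x ∈ commutant k A ∧ y ∈ commutant k A :=
  ⟨hxy.symm.right_mem_commutant hltf hnab, hxy.right_mem_commutant hltf hnab⟩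

/-- in a nonabelian metabelian Lie algebra with linear-torsion free
commutant, every pair of zero divisors lies in the commutant. -/
theorem zeroDivPair_mem_commutant (k : Type*) [Field k] {A : Type*} [LieRing A]
    [LieAlgebra k A] (hmet : IsMetabelianLie A)
    (hnab : ¬ ∀ x y : A, ⁅x, y⁆ = 0) (hltf : LTFree k A)
    {x y : A} (hxy : IsZeroDivPair k x y) :
    x ∈ commutant k A ∧ y ∈ commutant k A :=
  zeroDivPair_mem_commutant_general k hnab hltf hxy
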